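/- arXiv:2002.05614 — 2 statements merged into one kernel-verified Lean document; each statement's English description precedes it below -/
import Mathlib

section
/- Let E be a real inner product space, let γ > 0 and α > 0, and let a, b, q, p ∈ E satisfy ‖q‖ ≤ α, α • a = ‖a‖ • q, and max(‖b‖, γ) • p = α • b. Then ⟪p − q, a − b⟫ ≤ γ·α. -/
/-!
Split `⟪p - q, a - b⟫ = ⟪p - q, a⟫ + ⟪q - p, b⟫`. The exact condition gives `⟪q, a⟫ = α ‖a‖`,
while `‖p‖ ≤ α`, so the first term is nonpositive. For the second, `p = (α / m) b` with
`m = max ‖b‖ γ`, hence `⟪q - p, b⟫ ≤ α ‖b‖ (m - ‖b‖) / m ≤ α (m - ‖b‖) ≤ α γ`.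
-/

open RealInnerProductSpace

section

variable {E : Type*} [NormedAddCommGroup E] [InnerProductSpace ℝ E]

theorem inner_eq_mul_norm_of_smul_eq_norm_smul {α : ℝ} {a q : E} (h : α • a = ‖a‖ • q) :
    ⟪q, a⟫ = α * ‖a‖ := by
  rcases eq_or_ne a 0 with rfl | ha
  · simp
  have hinner : α * ‖a‖ ^ 2 = ‖a‖ * ⟪q, a⟫ := by
    simpa only [real_inner_smul_left, real_inner_self_eq_norm_sq] using congrArg (⟪·, a⟫) h
  have hna : ‖a‖ ≠ 0 := norm_ne_zero_iff.mpr ha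
  exact (mul_left_cancel₀ hna (by linear_combination hinner)).symm

theorem inner_sub_nonpos_of_smul_eq_norm_smul {α : ℝ} {a p q : E} (hp : ‖p‖ ≤ α)
    (h : α • a = ‖a‖ • q) : ⟪p - q, a⟫ ≤ 0 := by
  rw [inner_sub_left, inner_eq_mul_norm_of_smul_eq_norm_smul h]
  nlinarith [real_inner_le_norm p a, norm_nonneg a]

theorem norm_le_of_max_smul_eq {γ α : ℝ} {b p : E} (hγ : 0 < γ) (hα : 0 ≤ α)
    (h : max ‖b‖ γ • p = α • b) : ‖p‖ ≤ α := by
  have hm : 0 < max ‖b‖ γ := lt_max_of_lt_right hγ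
  have hnorm : max ‖b‖ γ * ‖p‖ = α * ‖b‖ := by
    simpa only [norm_smul, Real.norm_eq_abs, abs_of_pos hm, abs_of_nonneg hα]
      using congrArg norm h
  refine le_of_mul_le_mul_left ?_ hm
  nlinarith [le_max_left ‖b‖ γ]

theorem inner_sub_le_of_max_smul_eq {γ α : ℝ} {b p q : E} (hγ : 0 < γ) (hq : ‖q‖ ≤ α)
    (h : max ‖b‖ γ • p = α • b) : ⟪q - p, b⟫ ≤ γ * α := by
  set m := max ‖b‖ γ
  have hm : 0 < m := lt_max_of_lt_right hγ
  have hpb : m * ⟪p, b⟫ = α * ‖b‖ ^ 2 := by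
    simpa only [real_inner_smul_left, real_inner_self_eq_norm_sq] using congrArg (⟪·, b⟫) h
  have hqb : ⟪q, b⟫ ≤ α * ‖b‖ :=
    (real_inner_le_norm q b).trans (mul_le_mul_of_nonneg_right hq (norm_nonneg b))
  have hgap : m - ‖b‖ ≤ γ := by
    rcases le_total ‖b‖ γ with hb | hb
    · simp only [m, max_eq_right hb]; linarith [norm_nonneg b]
    · simp only [m, max_eq_left hb]; linarith
  have hα : 0 ≤ α := (norm_nonneg q).trans hq
  rw [inner_sub_left]
  refine le_of_mul_le_mul_left ?_ hm
  nlinarith [mul_le_mul (le_max_left ‖b‖ γ) hgap (by linarith [le_max_left ‖b‖ γ]) hm.le,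
    mul_le_mul_of_nonneg_left hqb hm.le]
end

theorem tgv_huber_exact_duality_gap_general
    {E : Type*} [NormedAddCommGroup E] [InnerProductSpace ℝ E]
    (γ α : ℝ) (hγ : 0 < γ) (a b q p : E)
    (hq : ‖q‖ ≤ α)
    (hexact : α • a = ‖a‖ • q)
    (hhuber : max ‖b‖ γ • p = α • b) :
    ⟪p - q, a - b⟫ ≤ γ * α := by
  have hp : ‖p‖ ≤ α := norm_le_of_max_smul_eq hγ ((norm_nonneg q).trans hq) hhuber
  have ha := inner_sub_nonpos_of_smul_eq_norm_smul hp hexact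
  have hb := inner_sub_le_of_max_smul_eq hγ hq hhuber
  rw [← neg_sub p q, inner_neg_left] at hb
  rw [inner_sub_right]
  linarith

theorem tgv_huber_exact_duality_gap
    {E : Type*} [NormedAddCommGroup E] [InnerProductSpace ℝ E]
    (γ α : ℝ) (hγ : 0 < γ) (hα : 0 < α) (a b q p : E)
    (hq : ‖q‖ ≤ α)
    (hexact : α • a = ‖a‖ • q)
    (hhuber : max ‖b‖ γ • p = α • b) :
    ⟪p - q, a - b⟫ ≤ γ * α :=
  tgv_huber_exact_duality_gap_general γ α hγ a b q p hq hexact hhuber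
end

section
/- Let E be a real inner product space, let γ > 0 and α > 0, and let v ∈ E. Define the Huber-regularized norm φ_γ : E → ℝ by φ_γ(v) = ‖v‖ − γ/2 if ‖v‖ ≥ γ and φ_γ(v) = ‖v‖²/(2γ) if ‖v‖ < γ. Then α·φ_γ(v) is the greatest element of the set { ⟪w, v⟫ − (γ/(2α))‖w‖² : w ∈ E, ‖w‖ ≤ α }; that is, the supremum of ⟪w, v⟫ − (γ/(2α))‖w‖² over the closed ball of radius α equals α·φ_γ(v) and is attained. -/
open RealInnerProductSpace

/-- The Huber-regularized norm with parameter `γ`. -/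
noncomputable def huberNorm {E : Type*} [NormedAddCommGroup E] (γ : ℝ) (v : E) : ℝ :=
  if γ ≤ ‖v‖ then ‖v‖ - γ / 2 else ‖v‖ ^ 2 / (2 * γ)

/-!
By scaling `w = α • u` the weight `α` only multiplies the objective, so it suffices to treat
`α = 1`. Cauchy–Schwarz bounds `⟪u, v⟫ - γ/2 ‖u‖²` by the one-variable concave quadratic
`t ‖v‖ - γ/2 t²` in `t = ‖u‖ ∈ [0, 1]`, whose maximum is `huberNorm γ v`, attained at
`t = min 1 (‖v‖ / γ)`, i.e. at `u = (max γ ‖v‖)⁻¹ • v`.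
-/

section

variable {E : Type*} [NormedAddCommGroup E] {γ : ℝ} {v : E}

theorem huberNorm_of_le (h : γ ≤ ‖v‖) : huberNorm γ v = ‖v‖ - γ / 2 := if_pos h

theorem huberNorm_of_lt (h : ‖v‖ < γ) : huberNorm γ v = ‖v‖ ^ 2 / (2 * γ) := if_neg h.not_ge

theorem mul_norm_sub_half_mul_sq_le_huberNorm (hγ : 0 < γ) {t : ℝ} (ht : t ≤ 1) :
    t * ‖v‖ - γ / 2 * t ^ 2 ≤ huberNorm γ v := by
  rcases le_or_gt γ ‖v‖ with h | h
  · rw [huberNorm_of_le h]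
    -- the gap is `(1 - t) (‖v‖ - γ) + γ/2 (1 - t)²`
    nlinarith [mul_nonneg (sub_nonneg.2 ht) (sub_nonneg.2 h),
      mul_nonneg hγ.le (sq_nonneg (1 - t))]
  · have hsq : ‖v‖ ^ 2 / (2 * γ) - (t * ‖v‖ - γ / 2 * t ^ 2) = (‖v‖ - γ * t) ^ 2 / (2 * γ) := by
      field_simp
      ring
    rw [huberNorm_of_lt h]
    linarith [show 0 ≤ (‖v‖ - γ * t) ^ 2 / (2 * γ) by positivity]

end

section

variable {E : Type*} [NormedAddCommGroup E] [InnerProductSpace ℝ E] {γ : ℝ}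

theorem inner_sub_half_mul_sq_le_huberNorm (hγ : 0 < γ) {u : E} (hu : ‖u‖ ≤ 1) (v : E) :
    ⟪u, v⟫ - γ / 2 * ‖u‖ ^ 2 ≤ huberNorm γ v :=
  (sub_le_sub_right (real_inner_le_norm u v) _).trans
    (mul_norm_sub_half_mul_sq_le_huberNorm hγ hu)

theorem norm_inv_max_smul_le_one (hγ : 0 < γ) (v : E) : ‖(max γ ‖v‖)⁻¹ • v‖ ≤ 1 := by
  have hm : 0 < max γ ‖v‖ := lt_max_of_lt_left hγ
  rw [norm_smul, norm_inv, Real.norm_of_nonneg hm.le, inv_mul_le_one₀ hm]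
  exact le_max_right γ ‖v‖

theorem inner_inv_max_smul_sub_half_mul_sq (hγ : 0 < γ) (v : E) :
    ⟪(max γ ‖v‖)⁻¹ • v, v⟫ - γ / 2 * ‖(max γ ‖v‖)⁻¹ • v‖ ^ 2 = huberNorm γ v := by
  have hm : 0 < max γ ‖v‖ := lt_max_of_lt_left hγ
  rw [real_inner_smul_left, real_inner_self_eq_norm_sq, norm_smul, norm_inv,
    Real.norm_of_nonneg hm.le]
  rcases le_or_gt γ ‖v‖ with h | h
  · have hv : ‖v‖ ≠ 0 := (hγ.trans_le h).ne'
    rw [max_eq_right h, huberNorm_of_le h]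
    field_simp
  · rw [max_eq_left h.le, huberNorm_of_lt h]
    field_simp
    ring

theorem isGreatest_inner_sub_half_mul_sq (hγ : 0 < γ) (v : E) :
    IsGreatest {r : ℝ | ∃ u : E, ‖u‖ ≤ 1 ∧ r = ⟪u, v⟫ - γ / 2 * ‖u‖ ^ 2} (huberNorm γ v) :=
  ⟨⟨_, norm_inv_max_smul_le_one hγ v, (inner_inv_max_smul_sub_half_mul_sq hγ v).symm⟩,
    fun _ ⟨_, hu, hr⟩ => hr ▸ inner_sub_half_mul_sq_le_huberNorm hγ hu v⟩

theorem inner_smul_sub_mul_norm_smul_sq {α : ℝ} (hα : α ≠ 0) (u v : E) :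
    ⟪α • u, v⟫ - γ / (2 * α) * ‖α • u‖ ^ 2 = α * (⟪u, v⟫ - γ / 2 * ‖u‖ ^ 2) := by
  rw [real_inner_smul_left, norm_smul, Real.norm_eq_abs, mul_pow, sq_abs]
  field_simp

end

theorem huberNorm_dual_representation
    {E : Type*} [NormedAddCommGroup E] [InnerProductSpace ℝ E]
    (γ α : ℝ) (hγ : 0 < γ) (hα : 0 < α) (v : E) :
    IsGreatest {r : ℝ | ∃ w : E, ‖w‖ ≤ α ∧ r = ⟪w, v⟫ - (γ / (2 * α)) * ‖w‖ ^ 2}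
      (α * huberNorm γ v) := by
  have hscale : {r : ℝ | ∃ w : E, ‖w‖ ≤ α ∧ r = ⟪w, v⟫ - (γ / (2 * α)) * ‖w‖ ^ 2} =
      (α * ·) '' {r : ℝ | ∃ u : E, ‖u‖ ≤ 1 ∧ r = ⟪u, v⟫ - γ / 2 * ‖u‖ ^ 2} := by
    ext r
    constructor
    · rintro ⟨w, hw, rfl⟩
      obtain ⟨u, rfl⟩ : ∃ u, w = α • u := ⟨α⁻¹ • w, (smul_inv_smul₀ hα.ne' w).symm⟩
      rw [norm_smul, Real.norm_of_nonneg hα.le, mul_le_iff_le_one_right hα] at hw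
      exact ⟨_, ⟨u, hw, rfl⟩, (inner_smul_sub_mul_norm_smul_sq hα.ne' u v).symm⟩
    · rintro ⟨_, ⟨u, hu, rfl⟩, rfl⟩
      refine ⟨α • u, ?_, (inner_smul_sub_mul_norm_smul_sq hα.ne' u v).symm⟩
      rw [norm_smul, Real.norm_of_nonneg hα.le]
      exact mul_le_of_le_one_right hα.le hu
  rw [hscale]
  exact (monotone_mul_left_of_nonneg hα.le).map_isGreatest (isGreatest_inner_sub_half_mul_sq hγ v)
end
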